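/- arXiv:2507.16139 — 2 statements merged into one kernel-verified Lean document; each statement's English description precedes it below -/
import Mathlib

section
/- For a G-invariant finite goal-conditioned MDP, every fixed point Q* of the goal-conditioned Bellman optimality operator (i.e., T Q* = Q*) is G-invariant: Q*(g • s, g • a, g • h) = Q*(s, a, h) for all g ∈ G, s ∈ S, a ∈ A, h ∈ 𝒢. -/
open Finset

/-- The goal-conditioned Bellman optimality operator:
`(T Q)(s, a, h) = r(s, a, h) + γ · ∑_{s'} p(s, a, s') · (max_{a'} Q(s', a', h))`. -/
noncomputable def bellmanGC {S A 𝒢 : Type*} [Fintype S] [Fintype A] [Nonempty A]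
    (p : S → A → S → ℝ) (r : S → A → 𝒢 → ℝ) (γ : ℝ)
    (Q : S → A → 𝒢 → ℝ) : S → A → 𝒢 → ℝ :=
  fun s a h =>
    r s a h + γ * ∑ s', p s a s' * (univ.sup' univ_nonempty (fun a' => Q s' a' h))

private lemma sup'_equiv_reindex {A : Type*} [Fintype A] [Nonempty A] (e : A ≃ A)
    (f : A → ℝ) :
    univ.sup' univ_nonempty f = univ.sup' univ_nonempty (fun a => f (e a)) := by
  apply le_antisymm
  · exact Finset.sup'_le _ _ fun a _ => by
      simpa only [Equiv.apply_symm_apply] using Finset.le_sup' (f := fun a => f (e a)) (mem_univ (e.symm a))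
  · exact Finset.sup'_le _ _ fun a _ => Finset.le_sup' f (mem_univ (e a))

private lemma abs_sup'_sub_sup'_le {A : Type*} [Fintype A] [Nonempty A]
    (f f' : A → ℝ) (c : ℝ) (h : ∀ a, |f a - f' a| ≤ c) :
    |univ.sup' univ_nonempty f - univ.sup' univ_nonempty f'| ≤ c := by
  rw [abs_le]
  constructor
  · rw [neg_le, neg_sub]
    rw [sub_le_iff_le_add]
    refine Finset.sup'_le _ _ fun a _ => ?_
    have h1 := (abs_le.mp (h a)).1
    have h2 : f' a ≤ f a + c := by linarith
    linarith [Finset.le_sup' f (mem_univ a)]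
  · rw [sub_le_iff_le_add]
    refine Finset.sup'_le _ _ fun a _ => ?_
    have h1 := (abs_le.mp (h a)).2
    have h2 : f a ≤ f' a + c := by linarith
    linarith [Finset.le_sup' f' (mem_univ a)]

/-- For a `G`-invariant finite goal-conditioned MDP, every fixed point of the
goal-conditioned Bellman optimality operator is `G`-invariant. -/
theorem fixedPoint_bellmanGC_invariant
    {G S A 𝒢 : Type*} [Group G]
    [Fintype S] [Fintype A] [Fintype 𝒢]
    [Nonempty S] [Nonempty A] [Nonempty 𝒢]
    [MulAction G S] [MulAction G A] [MulAction G 𝒢]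
    (p : S → A → S → ℝ) (r : S → A → 𝒢 → ℝ) (γ : ℝ)
    (hp_nonneg : ∀ s a s', 0 ≤ p s a s')
    (hp_sum : ∀ s a, ∑ s', p s a s' = 1)
    (hγ0 : 0 ≤ γ) (hγ1 : γ < 1)
    (hp_inv : ∀ (g : G) (s : S) (a : A) (s' : S),
      p (g • s) (g • a) (g • s') = p s a s')
    (hr_inv : ∀ (g : G) (s : S) (a : A) (h : 𝒢),
      r (g • s) (g • a) (g • h) = r s a h)
    (Q : S → A → 𝒢 → ℝ)
    (hfix : bellmanGC p r γ Q = Q) :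
    ∀ (g : G) (s : S) (a : A) (h : 𝒢), Q (g • s) (g • a) (g • h) = Q s a h := by
  intro g
  set F : S × A × 𝒢 → ℝ := fun x => |Q (g • x.1) (g • x.2.1) (g • x.2.2) - Q x.1 x.2.1 x.2.2|
    with hF
  set D : ℝ := univ.sup' univ_nonempty F with hD
  have hD0 : 0 ≤ D := le_trans (abs_nonneg _) (Finset.le_sup' F (mem_univ (Classical.arbitrary _)))
  have hQ : ∀ s a h, Q s a h = bellmanGC p r γ Q s a h := fun s a h => by rw [hfix]
  have hstep : ∀ s a h, |Q (g • s) (g • a) (g • h) - Q s a h| ≤ γ * D := by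
    intro s a h
    rw [hQ (g • s) (g • a) (g • h), hQ s a h]
    unfold bellmanGC
    rw [hr_inv]
    have hsum : ∑ s', p (g • s) (g • a) s' *
        (univ.sup' univ_nonempty (fun a' => Q s' a' (g • h)))
        = ∑ s', p s a s' *
        (univ.sup' univ_nonempty (fun a' => Q (g • s') a' (g • h))) := by
      refine (Fintype.sum_equiv (MulAction.toPerm g) _ _ fun s' => ?_).symm
      simp [MulAction.toPerm_apply, hp_inv]
    rw [hsum]
    rw [show ∀ x y z : ℝ, x + γ * y - (x + γ * z) = γ * (y - z) from fun _ _ _ => by ring,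
      abs_mul, abs_of_nonneg hγ0, ← Finset.sum_sub_distrib]
    gcongr γ * ?_
    calc |∑ s', (p s a s' * (univ.sup' univ_nonempty fun a' => Q (g • s') a' (g • h))
          - p s a s' * (univ.sup' univ_nonempty fun a' => Q s' a' h))|
        ≤ ∑ s', |p s a s' * (univ.sup' univ_nonempty fun a' => Q (g • s') a' (g • h))
          - p s a s' * (univ.sup' univ_nonempty fun a' => Q s' a' h)| :=
          Finset.abs_sum_le_sum_abs _ _
      _ ≤ ∑ s', p s a s' * D := by
          refine Finset.sum_le_sum fun s' _ => ?_
          rw [← mul_sub, abs_mul, abs_of_nonneg (hp_nonneg s a s')]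
          gcongr
          · exact hp_nonneg s a s'
          · have hre : (univ.sup' univ_nonempty fun a' => Q (g • s') a' (g • h))
                = univ.sup' univ_nonempty fun a' => Q (g • s') (g • a') (g • h) :=
              sup'_equiv_reindex (MulAction.toPerm g) _
            rw [hre]
            exact abs_sup'_sub_sup'_le _ _ D fun a' =>
              Finset.le_sup' F (mem_univ (s', a', h))
      _ = D := by rw [← Finset.sum_mul, hp_sum, one_mul]
  have hDD : D ≤ γ * D := Finset.sup'_le _ _ fun x _ => hstep x.1 x.2.1 x.2.2
  have hDz : D = 0 := by nlinarith
  intro s a h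
  have := le_trans (Finset.le_sup' F (mem_univ (s, a, h))) hDz.le
  have := abs_nonneg (Q (g • s) (g • a) (g • h) - Q s a h)
  have : |Q (g • s) (g • a) (g • h) - Q s a h| = 0 := le_antisymm (by simpa [hF] using ‹F (s,a,h) ≤ 0›) (abs_nonneg _)
  linarith [abs_eq_zero.mp this, sub_eq_zero.mp (abs_eq_zero.mp this)]
end

section
/- For a G-invariant finite MDP, every fixed point Q* of the Bellman optimality operator (T Q* = Q*) is G-invariant: Q*(g • s, g • a) = Q*(s, a) for all g ∈ G, s ∈ S, a ∈ A. -/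
open Finset

/-- The Bellman optimality operator:
`(T Q)(s, a) = r(s, a) + γ · ∑_{s'} p(s, a, s') · (max_{a'} Q(s', a'))`. -/
noncomputable def bellman {S A : Type*} [Fintype S] [Fintype A] [Nonempty A]
    (p : S → A → S → ℝ) (r : S → A → ℝ) (γ : ℝ)
    (Q : S → A → ℝ) : S → A → ℝ :=
  fun s a =>
    r s a + γ * ∑ s', p s a s' * (univ.sup' univ_nonempty (fun a' => Q s' a'))

/-! The Bellman operator is a `γ`-contraction for the sup distance, so it has at most one fixed
point. Invariance of `p` and `r` makes it commute with `Q ↦ Q (g • ·) (g • ·)`, so this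
translate of a fixed point is again a fixed point, hence equal to it. -/

section SupUniv

variable {ι κ : Type*} [Fintype ι] [Nonempty ι]

theorem Finset.sup'_univ_le_sup'_univ_add_dist (f h : ι → ℝ) :
    univ.sup' univ_nonempty f ≤ univ.sup' univ_nonempty h + dist f h :=
  sup'_le _ _ fun i _ =>
    calc f i ≤ h i + dist (f i) (h i) := by
          rw [Real.dist_eq]; linarith [le_abs_self (f i - h i)]
      _ ≤ univ.sup' univ_nonempty h + dist f h :=
          add_le_add (le_sup' h (mem_univ i)) (dist_le_pi_dist f h i)

theorem Finset.abs_sup'_univ_sub_sup'_univ_le_dist (f h : ι → ℝ) :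
    |univ.sup' univ_nonempty f - univ.sup' univ_nonempty h| ≤ dist f h := by
  refine abs_sub_le_iff.2 ⟨sub_le_iff_le_add'.2 (sup'_univ_le_sup'_univ_add_dist f h), ?_⟩
  rw [sub_le_iff_le_add', dist_comm]
  exact sup'_univ_le_sup'_univ_add_dist h f

theorem Finset.sup'_univ_comp_equiv [Fintype κ] [Nonempty κ] {α : Type*} [SemilatticeSup α]
    (e : ι ≃ κ) (f : κ → α) :
    univ.sup' univ_nonempty (f ∘ e) = univ.sup' univ_nonempty f :=
  (sup'_comp_eq_map (f := e.toEmbedding) f univ_nonempty).trans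
    (sup'_congr _ (map_univ_equiv e) fun _ _ => rfl)

end SupUniv

section Bellman

variable {S A : Type*} [Fintype S] [Fintype A] [Nonempty A]
  {p : S → A → S → ℝ} {r : S → A → ℝ} {γ : ℝ}

theorem dist_bellman_le (hp_nonneg : ∀ s a s', 0 ≤ p s a s')
    (hp_sum : ∀ s a, ∑ s', p s a s' = 1) (hγ0 : 0 ≤ γ) (Q Q' : S → A → ℝ) :
    dist (bellman p r γ Q) (bellman p r γ Q') ≤ γ * dist Q Q' := by
  refine (dist_pi_le_iff (by positivity)).2 fun s => (dist_pi_le_iff (by positivity)).2 fun a => ?_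
  have hmax : ∀ s', |univ.sup' univ_nonempty (Q s') - univ.sup' univ_nonempty (Q' s')|
      ≤ dist Q Q' := fun s' =>
    (abs_sup'_univ_sub_sup'_univ_le_dist _ _).trans (dist_le_pi_dist Q Q' s')
  calc dist (bellman p r γ Q s a) (bellman p r γ Q' s a)
      = γ * |∑ s', p s a s' *
          (univ.sup' univ_nonempty (Q s') - univ.sup' univ_nonempty (Q' s'))| := by
        simp only [bellman, Real.dist_eq, add_sub_add_left_eq_sub, ← mul_sub, ← sum_sub_distrib,
          abs_mul, abs_of_nonneg hγ0]
    _ ≤ γ * ∑ s', p s a s' * dist Q Q' := by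
        gcongr
        refine (abs_sum_le_sum_abs _ _).trans (sum_le_sum fun s' _ => ?_)
        rw [abs_mul, abs_of_nonneg (hp_nonneg s a s')]
        exact mul_le_mul_of_nonneg_left (hmax s') (hp_nonneg s a s')
    _ = γ * dist Q Q' := by rw [← sum_mul, hp_sum, one_mul]

theorem bellman_contractingWith (hp_nonneg : ∀ s a s', 0 ≤ p s a s')
    (hp_sum : ∀ s a, ∑ s', p s a s' = 1) (hγ0 : 0 ≤ γ) (hγ1 : γ < 1) :
    ContractingWith ⟨γ, hγ0⟩ (bellman p r γ) :=
  ⟨hγ1, LipschitzWith.of_dist_le_mul (dist_bellman_le hp_nonneg hp_sum hγ0)⟩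

theorem bellman_comp_smul {G : Type*} [Group G] [MulAction G S] [MulAction G A] {g : G}
    (hp_inv : ∀ s a s', p (g • s) (g • a) (g • s') = p s a s')
    (hr_inv : ∀ s a, r (g • s) (g • a) = r s a) (Q : S → A → ℝ) :
    bellman p r γ (fun s a => Q (g • s) (g • a)) = fun s a => bellman p r γ Q (g • s) (g • a) := by
  ext s a
  have hmax : ∀ s', univ.sup' univ_nonempty (fun a' => Q (g • s') (g • a'))
      = univ.sup' univ_nonempty (Q (g • s')) := fun s' =>
    sup'_univ_comp_equiv (MulAction.toPerm g) (Q (g • s'))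
  simp only [bellman, hr_inv, hmax]
  congr 2
  exact Fintype.sum_equiv (MulAction.toPerm g : S ≃ S) _ _ fun s' => by
    rw [MulAction.toPerm_apply, hp_inv]

end Bellman

theorem fixedPoint_bellman_invariant_general
    {G S A : Type*} [Group G]
    [Fintype S] [Fintype A] [Nonempty A]
    [MulAction G S] [MulAction G A]
    (p : S → A → S → ℝ) (r : S → A → ℝ) (γ : ℝ)
    (hp_nonneg : ∀ s a s', 0 ≤ p s a s')
    (hp_sum : ∀ s a, ∑ s', p s a s' = 1)
    (hγ0 : 0 ≤ γ) (hγ1 : γ < 1)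
    (hp_inv : ∀ (g : G) (s : S) (a : A) (s' : S),
      p (g • s) (g • a) (g • s') = p s a s')
    (hr_inv : ∀ (g : G) (s : S) (a : A), r (g • s) (g • a) = r s a)
    (Q : S → A → ℝ)
    (hfix : bellman p r γ Q = Q) :
    ∀ (g : G) (s : S) (a : A), Q (g • s) (g • a) = Q s a := by
  intro g s a
  have hfix_g : Function.IsFixedPt (bellman p r γ) fun s a => Q (g • s) (g • a) := by
    rw [Function.IsFixedPt, bellman_comp_smul (hp_inv g) (hr_inv g), hfix]
  have hQ := (bellman_contractingWith hp_nonneg hp_sum hγ0 hγ1).fixedPoint_unique' hfix_g hfix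
  exact congrFun (congrFun hQ s) a

/-- For a `G`-invariant finite MDP, every fixed point of the Bellman optimality
operator is `G`-invariant: `Q*(g • s, g • a) = Q*(s, a)`. -/
theorem fixedPoint_bellman_invariant
    {G S A : Type*} [Group G]
    [Fintype S] [Fintype A] [Nonempty S] [Nonempty A]
    [MulAction G S] [MulAction G A]
    (p : S → A → S → ℝ) (r : S → A → ℝ) (γ : ℝ)
    (hp_nonneg : ∀ s a s', 0 ≤ p s a s')
    (hp_sum : ∀ s a, ∑ s', p s a s' = 1)
    (hγ0 : 0 ≤ γ) (hγ1 : γ < 1)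
    (hp_inv : ∀ (g : G) (s : S) (a : A) (s' : S),
      p (g • s) (g • a) (g • s') = p s a s')
    (hr_inv : ∀ (g : G) (s : S) (a : A), r (g • s) (g • a) = r s a)
    (Q : S → A → ℝ)
    (hfix : bellman p r γ Q = Q) :
    ∀ (g : G) (s : S) (a : A), Q (g • s) (g • a) = Q s a :=
  fixedPoint_bellman_invariant_general p r γ hp_nonneg hp_sum hγ0 hγ1 hp_inv hr_inv Q hfix
end
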